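/- arXiv:1202.0986 — 2 statements merged into one kernel-verified Lean document; each statement's English description precedes it below -/
import Mathlib

section
/- There exists an absolute constant K > 0 with the following property. Let m be a positive integer and let A be a 2m×2m complex matrix with all diagonal entries zero, regarded as a 2×2 block matrix (A_{ij})_{1≤i,j≤2} with blocks of size m×m. Suppose that for i = 1, 2 there exist an m×m diagonal matrix B_i with all diagonal entries in the square Q and an m×m matrix C_i such that A_{ii} = B_i C_i − C_i B_i and ‖C_i‖ ≤ c_i, where c_1, c_2 are positive reals with c_1/c_2 < 1/4. Then there exist a 2m×2m diagonal matrix B with all diagonal entries in Q and a 2m×2m matrix C such that A = BC − CB and ‖C‖ ≤ (1 + K·((c_1/c_2)^{1/2} + ‖A‖/c_1)) · c_2. -/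
noncomputable def opNorm {ι κ : Type*} [Fintype ι] [Fintype κ] [DecidableEq κ]
    (A : Matrix ι κ ℂ) : ℝ :=
  ‖LinearMap.toContinuousLinearMap (Matrix.toEuclideanLin A)‖

def Qsq : Set ℂ := {z : ℂ | |z.re| ≤ 1 ∧ |z.im| ≤ 1}

/-!
Shrink the first diagonal block by the factor `l = √(c₁/c₂)/2` towards the corner
`c = -(1 - l)(1 + i)` of `Q`, and the second by the factor `1 - 3l` towards `0`. By convexity both
stay in `Q`, and the diagonal blocks of the new `C` are `C₁/l` and `C₂/(1 - 3l)`. The new diagonals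
are separated around `c`: the first lies in the disc of radius `3l/2`, the second outside the disc
of radius `2l`. For such diagonals `u`, `v` the off-diagonal blocks solve the Sylvester equation
`diag u · X - X · diag v = B` entrywise, `X_st = B_st / (u_s - v_t)`, and the identity
`X = (diag u · X - B) · (diag v)⁻¹` gives `‖X‖ ≤ ‖B‖ / (2l - 3l/2)`. Summing the norms of the four
blocks gives `‖C‖ ≤ c₁/l + c₂/(1 - 3l) + 4‖A‖/l ≤ (1 + 8(√(c₁/c₂) + ‖A‖/c₁)) c₂`.
-/

open scoped Matrix.Norms.L2Operator
open Matrix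

section L2OpNorm

variable {𝕜 : Type*} [RCLike 𝕜]

theorem Matrix.l2_opNorm_one_submatrix_le {ι κ : Type*} [Fintype ι] [DecidableEq ι] [Fintype κ]
    [DecidableEq κ] {f : κ → ι} (hf : Function.Injective f) :
    ‖(1 : Matrix ι ι 𝕜).submatrix id f‖ ≤ 1 := by
  set E := (1 : Matrix ι ι 𝕜).submatrix id f
  have hE : Eᴴ * E = 1 := by
    rw [conjTranspose_submatrix, conjTranspose_one]
    exact (one_submatrix_mul f (Equiv.refl ι) E).trans (submatrix_one f hf)
  have h1 : ‖(1 : Matrix κ κ 𝕜)‖ ≤ 1 := by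
    rw [← diagonal_one, l2_opNorm_diagonal]
    exact pi_norm_le_iff_of_nonneg zero_le_one |>.mpr fun _ => by simp
  have := l2_opNorm_conjTranspose_mul_self E
  rw [hE] at this
  nlinarith [norm_nonneg E]

theorem Matrix.l2_opNorm_submatrix_le {ι ι' κ κ' : Type*} [Fintype ι] [DecidableEq ι] [Fintype κ]
    [DecidableEq κ] [Fintype ι'] [DecidableEq ι'] [Fintype κ'] [DecidableEq κ']
    (A : Matrix ι κ 𝕜) {f : ι' → ι} {g : κ' → κ} (hf : Function.Injective f)
    (hg : Function.Injective g) : ‖A.submatrix f g‖ ≤ ‖A‖ := by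
  have hA : A.submatrix f g = ((1 : Matrix ι ι 𝕜).submatrix id f)ᴴ * A *
      (1 : Matrix κ κ 𝕜).submatrix id g := by
    rw [conjTranspose_submatrix, conjTranspose_one]
    exact (congrArg (· * _) (one_submatrix_mul f (Equiv.refl ι) A)).trans
      (mul_submatrix_one (Equiv.refl κ) g _) |>.symm
  calc ‖A.submatrix f g‖
      ≤ ‖((1 : Matrix ι ι 𝕜).submatrix id f)ᴴ‖ * ‖A‖ * ‖(1 : Matrix κ κ 𝕜).submatrix id g‖ := by
        rw [hA]; exact (l2_opNorm_mul _ _).trans (by gcongr; exact l2_opNorm_mul _ _)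
    _ ≤ 1 * ‖A‖ * 1 := by
        rw [l2_opNorm_conjTranspose]
        gcongr
        exacts [l2_opNorm_one_submatrix_le hf, l2_opNorm_one_submatrix_le hg]
    _ = ‖A‖ := by ring

theorem Matrix.l2_opNorm_comp_le {ι ι' κ κ' : Type*} [Fintype ι] [DecidableEq ι]
    [Fintype κ] [DecidableEq κ] [Fintype ι'] [DecidableEq ι'] [Fintype κ'] [DecidableEq κ']
    (M : Matrix ι ι' (Matrix κ κ' 𝕜)) : ‖comp ι ι' κ κ' 𝕜 M‖ ≤ ∑ i, ∑ j, ‖M i j‖ := by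
  set E : ι → Matrix (ι × κ) κ 𝕜 :=
    fun i => (1 : Matrix (ι × κ) (ι × κ) 𝕜).submatrix id (Prod.mk i)
  set F : ι' → Matrix (ι' × κ') κ' 𝕜 :=
    fun j => (1 : Matrix (ι' × κ') (ι' × κ') 𝕜).submatrix id (Prod.mk j)
  have hM : comp ι ι' κ κ' 𝕜 M = ∑ i, ∑ j, E i * M i j * (F j)ᴴ := by
    ext ⟨a, s⟩ ⟨b, t⟩
    simp [E, F, Matrix.sum_apply, mul_apply, one_apply, ite_and, Finset.sum_ite_eq, eq_comm]
  have hE : ∀ i, ‖E i‖ ≤ 1 := fun i => l2_opNorm_one_submatrix_le (Prod.mk_right_injective i)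
  have hF : ∀ j, ‖(F j)ᴴ‖ ≤ 1 := fun j => by
    rw [l2_opNorm_conjTranspose]; exact l2_opNorm_one_submatrix_le (Prod.mk_right_injective j)
  calc ‖comp ι ι' κ κ' 𝕜 M‖ ≤ ∑ i, ∑ j, ‖E i * M i j * (F j)ᴴ‖ := by
        rw [hM]
        exact (norm_sum_le _ _).trans (Finset.sum_le_sum fun i _ => norm_sum_le _ _)
    _ ≤ ∑ i, ∑ j, 1 * ‖M i j‖ * 1 := by
        gcongr with i _ j _
        refine (l2_opNorm_mul _ _).trans ?_
        gcongr
        · exact (l2_opNorm_mul _ _).trans (by gcongr; exact hE i)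
        · exact hF j
    _ = ∑ i, ∑ j, ‖M i j‖ := by simp

end L2OpNorm

theorem Matrix.diagonal_mul_sub_mul_diagonal_apply {α ι κ : Type*} [CommRing α] [Fintype ι]
    [DecidableEq ι] [Fintype κ] [DecidableEq κ] (u : ι → α) (v : κ → α) (X : Matrix ι κ α)
    (i : ι) (j : κ) : (diagonal u * X - X * diagonal v) i j = (u i - v j) * X i j := by
  simp only [sub_apply, diagonal_mul, mul_diagonal]
  ring

theorem Matrix.diagonal_mul_sub_mul_diagonal_affine {α κ : Type*} [Field α] [Fintype κ]
    [DecidableEq κ] {a : α} (ha : a ≠ 0) (c : α) (d : κ → α) (X : Matrix κ κ α) :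
    diagonal (fun s => a * d s + c) * (a⁻¹ • X) - (a⁻¹ • X) * diagonal (fun s => a * d s + c) =
      diagonal d * X - X * diagonal d := by
  ext s t
  simp only [diagonal_mul_sub_mul_diagonal_apply, smul_apply, smul_eq_mul]
  field_simp
  ring

section Sylvester

theorem norm_le_of_mul_sub_mul_eq_of_mul_eq_one {R : Type*} [NormedRing R] {a b b' x c : R}
    {r ρ : ℝ} (h : a * x - x * b = c) (hb : b * b' = 1) (ha : ‖a‖ ≤ r) (hb' : ‖b'‖ ≤ ρ⁻¹)
    (hrρ : r < ρ) : ‖x‖ ≤ ‖c‖ / (ρ - r) := by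
  have hr : 0 ≤ r := (norm_nonneg a).trans ha
  have hx : x = (a * x - c) * b' := by rw [← h, sub_sub_cancel, mul_assoc, hb, mul_one]
  have hρ : 0 < ρ := hr.trans_lt hrρ
  have key : ‖x‖ ≤ (r * ‖x‖ + ‖c‖) * ρ⁻¹ :=
    calc ‖x‖ = ‖(a * x - c) * b'‖ := congrArg _ hx
      _ ≤ (‖a‖ * ‖x‖ + ‖c‖) * ‖b'‖ := by
        refine (norm_mul_le _ _).trans ?_
        gcongr
        exact (norm_sub_le _ _).trans (by gcongr; exact norm_mul_le _ _)
      _ ≤ (r * ‖x‖ + ‖c‖) * ρ⁻¹ := by gcongr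
  rw [le_div_iff₀ (sub_pos.2 hrρ)]
  rw [← div_eq_mul_inv, le_div_iff₀ hρ] at key
  linarith

theorem norm_le_of_mul_sub_mul_eq_of_mul_eq_one' {R : Type*} [NormedRing R] {a a' b x c : R}
    {r ρ : ℝ} (h : a * x - x * b = c) (ha : a' * a = 1) (hb : ‖b‖ ≤ r) (ha' : ‖a'‖ ≤ ρ⁻¹)
    (hrρ : r < ρ) : ‖x‖ ≤ ‖c‖ / (ρ - r) := by
  have hop : MulOpposite.op b * MulOpposite.op x - MulOpposite.op x * MulOpposite.op a =
      -MulOpposite.op c := by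
    rw [← h]; simp [← MulOpposite.op_mul]
  simpa [MulOpposite.norm_op] using
    norm_le_of_mul_sub_mul_eq_of_mul_eq_one (b' := MulOpposite.op a') hop
      (by rw [← MulOpposite.op_mul, ha, MulOpposite.op_one]) hb ha' hrρ

variable {𝕜 : Type*} [RCLike 𝕜] {κ : Type*} [Fintype κ] [DecidableEq κ]

def sylvesterSolution (u v : κ → 𝕜) (A : Matrix κ κ 𝕜) : Matrix κ κ 𝕜 :=
  of fun s t => A s t / (u s - v t)

theorem diagonal_mul_sylvesterSolution_sub {u v : κ → 𝕜} (huv : ∀ s t, u s ≠ v t)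
    (A : Matrix κ κ 𝕜) :
    diagonal u * sylvesterSolution u v A - sylvesterSolution u v A * diagonal v = A := by
  ext s t
  rw [diagonal_mul_sub_mul_diagonal_apply]
  exact mul_div_cancel₀ _ (sub_ne_zero.2 (huv s t))

theorem Matrix.l2_opNorm_diagonal_inv_le {v : κ → 𝕜} {ρ : ℝ} (hρ : 0 < ρ)
    (hv : ∀ t, ρ ≤ ‖v t‖) : ‖diagonal v⁻¹‖ ≤ ρ⁻¹ := by
  rw [l2_opNorm_diagonal]
  refine pi_norm_le_iff_of_nonneg (by positivity) |>.mpr fun t => ?_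
  rw [Pi.inv_apply, norm_inv]
  exact inv_anti₀ hρ (hv t)

variable {u v : κ → 𝕜} {r ρ : ℝ}

theorem l2_opNorm_sylvesterSolution_le_of_norm_le_of_le_norm (hr : 0 ≤ r) (hrρ : r < ρ)
    (hu : ∀ s, ‖u s‖ ≤ r) (hv : ∀ t, ρ ≤ ‖v t‖) (A : Matrix κ κ 𝕜) :
    ‖sylvesterSolution u v A‖ ≤ ‖A‖ / (ρ - r) := by
  have hρ : 0 < ρ := hr.trans_lt hrρ
  have hv₀ : ∀ t, v t ≠ 0 := fun t => norm_pos_iff.1 (hρ.trans_le (hv t))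
  have huv : ∀ s t, u s ≠ v t := fun s t h => by linarith [hu s, hv t, congrArg norm h]
  refine norm_le_of_mul_sub_mul_eq_of_mul_eq_one (diagonal_mul_sylvesterSolution_sub huv A)
    ?_ ?_ (l2_opNorm_diagonal_inv_le hρ hv) hrρ
  · rw [diagonal_mul_diagonal, ← diagonal_one]
    exact congrArg diagonal (funext fun t => mul_inv_cancel₀ (hv₀ t))
  · rw [l2_opNorm_diagonal]
    exact pi_norm_le_iff_of_nonneg hr |>.mpr hu

theorem l2_opNorm_sylvesterSolution_le_of_le_norm_of_norm_le (hr : 0 ≤ r) (hrρ : r < ρ)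
    (hu : ∀ s, ρ ≤ ‖u s‖) (hv : ∀ t, ‖v t‖ ≤ r) (A : Matrix κ κ 𝕜) :
    ‖sylvesterSolution u v A‖ ≤ ‖A‖ / (ρ - r) := by
  have hρ : 0 < ρ := hr.trans_lt hrρ
  have hu₀ : ∀ s, u s ≠ 0 := fun s => norm_pos_iff.1 (hρ.trans_le (hu s))
  have huv : ∀ s t, u s ≠ v t := fun s t h => by linarith [hu s, hv t, congrArg norm h]
  refine norm_le_of_mul_sub_mul_eq_of_mul_eq_one' (diagonal_mul_sylvesterSolution_sub huv A)
    ?_ ?_ (l2_opNorm_diagonal_inv_le hρ hu) hrρ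
  · rw [diagonal_mul_diagonal, ← diagonal_one]
    exact congrArg diagonal (funext fun s => inv_mul_cancel₀ (hu₀ s))
  · rw [l2_opNorm_diagonal]
    exact pi_norm_le_iff_of_nonneg hr |>.mpr hv

omit [Fintype κ] [DecidableEq κ] in
theorem sylvesterSolution_sub_const (c : 𝕜) (A : Matrix κ κ 𝕜) :
    sylvesterSolution (fun s => u s - c) (fun t => v t - c) A = sylvesterSolution u v A := by
  simp only [sylvesterSolution, sub_sub_sub_cancel_right]

theorem exists_commutator_of_separated_diagonal_blocks {c : 𝕜} (hr : 0 ≤ r) (hrρ : r < ρ)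
    (hu : ∀ s, ‖u s - c‖ ≤ r) (hv : ∀ t, ρ ≤ ‖v t - c‖)
    {A : Matrix (Fin 2 × κ) (Fin 2 × κ) 𝕜} {X₀ X₁ : Matrix κ κ 𝕜}
    (hA₀ : A.submatrix (Prod.mk 0) (Prod.mk 0) = diagonal u * X₀ - X₀ * diagonal u)
    (hA₁ : A.submatrix (Prod.mk 1) (Prod.mk 1) = diagonal v * X₁ - X₁ * diagonal v) :
    ∃ C : Matrix (Fin 2 × κ) (Fin 2 × κ) 𝕜,
      A = diagonal (fun q => ![u, v] q.1 q.2) * C - C * diagonal (fun q => ![u, v] q.1 q.2) ∧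
      ‖C‖ ≤ ‖X₀‖ + ‖X₁‖ + 2 * ‖A‖ / (ρ - r) := by
  have huv : ∀ s t, u s ≠ v t := fun s t h => by
    linarith [hu s, hv t, congrArg (‖· - c‖) h]
  have hA : ∀ i j, ‖A.submatrix (Prod.mk i) (Prod.mk j)‖ / (ρ - r) ≤ ‖A‖ / (ρ - r) :=
    fun i j => div_le_div_of_nonneg_right
      (l2_opNorm_submatrix_le A (Prod.mk_right_injective i) (Prod.mk_right_injective j))
      (by linarith)
  have hS₀₁ :
      ‖sylvesterSolution u v (A.submatrix (Prod.mk 0) (Prod.mk 1))‖ ≤ ‖A‖ / (ρ - r) := by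
    rw [← sylvesterSolution_sub_const c]
    exact (l2_opNorm_sylvesterSolution_le_of_norm_le_of_le_norm hr hrρ hu hv _).trans (hA 0 1)
  have hS₁₀ :
      ‖sylvesterSolution v u (A.submatrix (Prod.mk 1) (Prod.mk 0))‖ ≤ ‖A‖ / (ρ - r) := by
    rw [← sylvesterSolution_sub_const c]
    exact (l2_opNorm_sylvesterSolution_le_of_le_norm_of_norm_le hr hrρ hv hu _).trans (hA 1 0)
  set S₀₁ := sylvesterSolution u v (A.submatrix (Prod.mk 0) (Prod.mk 1))
  set S₁₀ := sylvesterSolution v u (A.submatrix (Prod.mk 1) (Prod.mk 0))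
  have hblocks : ∀ i j s t,
      A (i, s) (j, t) = (![u, v] i s - ![u, v] j t) * !![X₀, S₀₁; S₁₀, X₁] i j s t := by
    simp only [Fin.forall_fin_two]
    refine ⟨⟨fun s t => ?_, fun s t => ?_⟩, fun s t => ?_, fun s t => ?_⟩
    · have h := congrFun₂ hA₀ s t
      rwa [submatrix_apply, diagonal_mul_sub_mul_diagonal_apply] at h
    · exact (mul_div_cancel₀ _ (sub_ne_zero.2 (huv s t))).symm
    · exact (mul_div_cancel₀ _ (sub_ne_zero.2 (huv t s).symm)).symm
    · have h := congrFun₂ hA₁ s t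
      rwa [submatrix_apply, diagonal_mul_sub_mul_diagonal_apply] at h
  refine ⟨comp _ _ _ _ _ !![X₀, S₀₁; S₁₀, X₁], ?_, ?_⟩
  · ext ⟨i, s⟩ ⟨j, t⟩
    rw [diagonal_mul_sub_mul_diagonal_apply]
    exact hblocks i j s t
  · calc _ ≤ ∑ i, ∑ j, ‖!![X₀, S₀₁; S₁₀, X₁] i j‖ := l2_opNorm_comp_le _
      _ = ‖X₀‖ + ‖S₀₁‖ + (‖S₁₀‖ + ‖X₁‖) := by simp [Fin.sum_univ_two]
      _ ≤ ‖X₀‖ + ‖X₁‖ + 2 * ‖A‖ / (ρ - r) := by rw [mul_div_assoc]; linarith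

end Sylvester

theorem convex_Qsq : Convex ℝ Qsq := by
  intro x hx y hy a b ha hb hab
  simp only [Qsq, Set.mem_ofPred_eq, abs_le, Complex.add_re, Complex.add_im, Complex.real_smul,
    Complex.re_ofReal_mul, Complex.im_ofReal_mul] at *
  refine ⟨⟨?_, ?_⟩, ?_, ?_⟩ <;> nlinarith

theorem norm_le_sqrt_two_of_mem_Qsq {z : ℂ} (hz : z ∈ Qsq) : ‖z‖ ≤ √2 := by
  rw [← Real.sqrt_sq (norm_nonneg z), Complex.sq_norm, Complex.normSq_apply]
  obtain ⟨hre, him⟩ := hz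
  gcongr
  nlinarith [abs_mul_abs_self z.re, abs_mul_abs_self z.im, abs_nonneg z.re, abs_nonneg z.im]

theorem exists_diagonal_commutator_of_diagonal_blocks {κ : Type*} [Fintype κ] [DecidableEq κ]
    {l : ℝ} (hl₀ : 0 < l) (hl : l < 1 / 4)
    {A : Matrix (Fin 2 × κ) (Fin 2 × κ) ℂ} {d₁ d₂ : κ → ℂ} {C₁ C₂ : Matrix κ κ ℂ}
    (hd₁ : ∀ s, d₁ s ∈ Qsq) (hd₂ : ∀ s, d₂ s ∈ Qsq)
    (hA₁ : A.submatrix (Prod.mk 0) (Prod.mk 0) = diagonal d₁ * C₁ - C₁ * diagonal d₁)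
    (hA₂ : A.submatrix (Prod.mk 1) (Prod.mk 1) = diagonal d₂ * C₂ - C₂ * diagonal d₂) :
    ∃ (d : Fin 2 × κ → ℂ) (C : Matrix (Fin 2 × κ) (Fin 2 × κ) ℂ), (∀ p, d p ∈ Qsq) ∧
      A = diagonal d * C - C * diagonal d ∧
      ‖C‖ ≤ l⁻¹ * ‖C₁‖ + (1 - 3 * l)⁻¹ * ‖C₂‖ + 4 * ‖A‖ / l := by
  have h3l : 0 < 1 - 3 * l := by linarith
  set c : ℂ := -(((1 - l : ℝ) : ℂ) * (1 + Complex.I))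
  set u : κ → ℂ := fun s => (l : ℂ) * d₁ s + c
  -- the `+ 0` is the shape `diagonal_mul_sub_mul_diagonal_affine` produces
  set v : κ → ℂ := fun s => ((1 - 3 * l : ℝ) : ℂ) * d₂ s + 0
  have hu : ∀ s, ‖u s - c‖ ≤ 3 / 2 * l := fun s => by
    have : √2 ≤ 3 / 2 := Real.sqrt_le_iff.2 ⟨by norm_num, by norm_num⟩
    rw [add_sub_cancel_right, norm_mul, Complex.norm_real, Real.norm_of_nonneg hl₀.le]
    nlinarith [norm_le_sqrt_two_of_mem_Qsq (hd₁ s)]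
  have hv : ∀ t, 2 * l ≤ ‖v t - c‖ := fun t => by
    have hre : (v t - c).re = (1 - 3 * l) * (d₂ t).re + (1 - l) := by simp [v, c]
    have := (abs_le.1 (hd₂ t).1).1
    nlinarith [Complex.re_le_norm (v t - c)]
  obtain ⟨C, hA, hC⟩ := exists_commutator_of_separated_diagonal_blocks (by positivity)
    (by linarith : 3 / 2 * l < 2 * l) hu hv
    (hA₁.trans (diagonal_mul_sub_mul_diagonal_affine (by exact_mod_cast hl₀.ne') c d₁ C₁).symm)
    (hA₂.trans (diagonal_mul_sub_mul_diagonal_affine (by exact_mod_cast h3l.ne') 0 d₂ C₂).symm)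
  refine ⟨_, C, ?_, hA, hC.trans ?_⟩
  · have hcorner : -(1 + Complex.I) ∈ Qsq := by simp [Qsq]
    have hzero : (0 : ℂ) ∈ Qsq := by simp [Qsq]
    simp only [Prod.forall, Fin.forall_fin_two]
    refine ⟨fun s => ?_, fun s => ?_⟩
    · show u s ∈ Qsq
      convert convex_Qsq (hd₁ s) hcorner hl₀.le (by linarith : 0 ≤ 1 - l) (by ring) using 1
      simp only [u, c, Complex.real_smul]
      ring
    · show v s ∈ Qsq
      convert convex_Qsq.smul_mem_of_zero_mem hzero (hd₂ s) (t := 1 - 3 * l)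
        ⟨h3l.le, by linarith⟩ using 1
      simp only [v, Complex.real_smul, add_zero]
  · rw [norm_smul, norm_smul, norm_inv, norm_inv, Complex.norm_real, Complex.norm_real,
      Real.norm_of_nonneg hl₀.le, Real.norm_of_nonneg h3l.le]
    apply le_of_eq
    field_simp
    ring

theorem rescaling_bound_le {σ c₂ x₁ x₂ a : ℝ} (hσ₀ : 0 < σ) (hσ : σ < 1 / 2) (hc₂ : 0 < c₂)
    (ha : 0 ≤ a) (hx₁ : x₁ ≤ σ ^ 2 * c₂) (hx₂ : x₂ ≤ c₂) :
    (σ / 2)⁻¹ * x₁ + (1 - 3 * (σ / 2))⁻¹ * x₂ + 4 * a / (σ / 2) ≤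
      (1 + 8 * (σ + a / (σ ^ 2 * c₂))) * c₂ := by
  have h₁ : (σ / 2)⁻¹ * x₁ ≤ 2 * σ * c₂ := by
    calc (σ / 2)⁻¹ * x₁ ≤ (σ / 2)⁻¹ * (σ ^ 2 * c₂) := by gcongr
      _ = 2 * σ * c₂ := by field_simp
  have h₂ : (1 - 3 * (σ / 2))⁻¹ * x₂ ≤ (1 + 6 * σ) * c₂ := by
    have : 0 < 1 - 3 * (σ / 2) := by linarith
    calc (1 - 3 * (σ / 2))⁻¹ * x₂ ≤ (1 - 3 * (σ / 2))⁻¹ * c₂ := by gcongr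
      _ ≤ (1 + 6 * σ) * c₂ := by
          gcongr
          rw [inv_le_iff_one_le_mul₀ this]
          nlinarith
  have h₃ : 4 * a / (σ / 2) ≤ 8 * (a / (σ ^ 2 * c₂)) * c₂ := by
    rw [div_le_iff₀ (by positivity)]
    field_simp
    nlinarith
  nlinarith

/-- There is an absolute K > 0 such that: if a zero-diagonal 2m×2m matrix A has its two
diagonal m×m blocks of the form [Bᵢ, Cᵢ] with Bᵢ diagonal with entries in Q and
‖Cᵢ‖ ≤ cᵢ, where 0 < c₁, 0 < c₂ and c₁/c₂ < 1/4, then A = [B, C] with B diagonal with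
entries in Q and ‖C‖ ≤ (1 + K·((c₁/c₂)^{1/2} + ‖A‖/c₁)) · c₂. -/
theorem stmt6 :
    ∃ K : ℝ, 0 < K ∧ ∀ (m : ℕ), 0 < m →
      ∀ (c₁ c₂ : ℝ), 0 < c₁ → 0 < c₂ → c₁ / c₂ < 1 / 4 →
      ∀ A : Matrix (Fin 2 × Fin m) (Fin 2 × Fin m) ℂ,
        (∀ p, A p p = 0) →
        (∃ (d₁ : Fin m → ℂ) (C₁ : Matrix (Fin m) (Fin m) ℂ),
          (∀ s, d₁ s ∈ Qsq) ∧
          (Matrix.of fun s t => A (0, s) (0, t)) =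
            Matrix.diagonal d₁ * C₁ - C₁ * Matrix.diagonal d₁ ∧
          opNorm C₁ ≤ c₁) →
        (∃ (d₂ : Fin m → ℂ) (C₂ : Matrix (Fin m) (Fin m) ℂ),
          (∀ s, d₂ s ∈ Qsq) ∧
          (Matrix.of fun s t => A (1, s) (1, t)) =
            Matrix.diagonal d₂ * C₂ - C₂ * Matrix.diagonal d₂ ∧
          opNorm C₂ ≤ c₂) →
        ∃ (d : Fin 2 × Fin m → ℂ) (C : Matrix (Fin 2 × Fin m) (Fin 2 × Fin m) ℂ),
          (∀ p, d p ∈ Qsq) ∧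
          A = Matrix.diagonal d * C - C * Matrix.diagonal d ∧
          opNorm C ≤ (1 + K * (Real.sqrt (c₁ / c₂) + opNorm A / c₁)) * c₂ := by
  refine ⟨8, by norm_num, ?_⟩
  rintro m - c₁ c₂ hc₁ hc₂ hc A - ⟨d₁, C₁, hd₁, hA₁, hC₁⟩ ⟨d₂, C₂, hd₂, hA₂, hC₂⟩
  set σ := √(c₁ / c₂)
  have hσ₀ : 0 < σ := Real.sqrt_pos.2 (div_pos hc₁ hc₂)
  have hc₁σ : c₁ = σ ^ 2 * c₂ := by
    rw [Real.sq_sqrt (div_pos hc₁ hc₂).le, div_mul_cancel₀ _ hc₂.ne']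
  have hσ : σ < 1 / 2 := by
    rw [Real.sqrt_lt' (by norm_num)]
    linarith
  obtain ⟨d, C, hd, hA, hC⟩ := exists_diagonal_commutator_of_diagonal_blocks (half_pos hσ₀)
    (by linarith) hd₁ hd₂ hA₁ hA₂
  -- `opNorm` is definitionally the `Matrix.Norms.L2Operator` norm `‖·‖`.
  refine ⟨d, C, hd, hA, hC.trans ?_⟩
  rw [hc₁σ] at hC₁ ⊢
  exact rescaling_bound_le hσ₀ hσ hc₂ (norm_nonneg A) hC₁ hC₂
end

section
/- Let m ≥ 2 and let B be any m×m diagonal complex matrix with all diagonal entries in the square Q. Then there exists an m×m complex matrix A with zero diagonal and ‖A‖ = 1 (namely a matrix unit: A has a single entry equal to 1 off the diagonal and all other entries 0) such that every m×m complex matrix C satisfying A = BC − CB has ‖C‖ ≥ √(m/32). In particular, the factor √m in the universal-diagonal commutator bound cannot be replaced by any smaller power of m. -/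
/-! Cut `Q` into a `k × k` grid of squares of side `2 / k`, with `k² < m ≤ 4k²`. By pigeonhole
two diagonal entries `d i`, `d j` with `i ≠ j` lie in one square, so
`‖d i - d j‖² ≤ 8 / k² ≤ 32 / m`. For `A = E_ij` the `(i, j)` entry of `BC - CB` is
`(d i - d j) C i j = 1`, hence `‖C‖ ≥ ‖C i j‖ = 1 / ‖d i - d j‖ ≥ √(m / 32)`. -/

theorem norm_apply_le_opNorm {ι κ : Type*} [Fintype ι] [Fintype κ] [DecidableEq κ]
    (A : Matrix ι κ ℂ) (i : ι) (j : κ) : ‖A i j‖ ≤ opNorm A := by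
  have h : ‖Matrix.toEuclideanLin A (EuclideanSpace.single j 1)‖ ≤ opNorm A := by
    simpa [opNorm] using (LinearMap.toContinuousLinearMap (Matrix.toEuclideanLin A)).le_opNorm
      (EuclideanSpace.single j 1)
  calc ‖A i j‖ = ‖Matrix.toEuclideanLin A (EuclideanSpace.single j 1) i‖ := by
        simp [Matrix.toLpLin_apply]
    _ ≤ ‖Matrix.toEuclideanLin A (EuclideanSpace.single j 1)‖ := PiLp.norm_apply_le _ i
    _ ≤ opNorm A := h

theorem opNorm_single_one {ι κ : Type*} [Fintype ι] [Fintype κ] [DecidableEq ι] [DecidableEq κ]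
    (i : ι) (j : κ) : opNorm (Matrix.single i j (1 : ℂ)) = 1 := by
  refine le_antisymm (ContinuousLinearMap.opNorm_le_bound _ zero_le_one fun x => ?_) ?_
  · have : Matrix.toEuclideanLin (Matrix.single i j (1 : ℂ)) x = EuclideanSpace.single i (x j) := by
      ext l; simp [Matrix.toLpLin_apply, Matrix.single_mulVec, Function.update_apply]
    simpa [this] using PiLp.norm_apply_le x j
  · simpa using norm_apply_le_opNorm (Matrix.single i j (1 : ℂ)) i j

theorem diagonal_mul_sub_mul_diagonal_apply {n R : Type*} [DecidableEq n] [Fintype n] [Ring R]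
    (d : n → R) (C : Matrix n n R) (i j : n) :
    (Matrix.diagonal d * C - C * Matrix.diagonal d) i j = d i * C i j - C i j * d j := by
  simp [Matrix.diagonal_mul, Matrix.mul_diagonal]

/-- Index of the cell containing `x` when `[-1, 1]` is cut into `k` intervals of length `2 / k`;
the right endpoint `1` is put into the last cell. -/
noncomputable def gridCell (k : ℕ) (x : ℝ) : ℕ := min ⌊(x + 1) * k / 2⌋₊ (k - 1)

theorem gridCell_lt {k : ℕ} (hk : 1 ≤ k) (x : ℝ) : gridCell k x < k := by
  unfold gridCell; omega

theorem gridCell_le_and_le_add_one {k : ℕ} (hk : 1 ≤ k) {x : ℝ} (hx : |x| ≤ 1) :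
    (gridCell k x : ℝ) ≤ (x + 1) * k / 2 ∧ (x + 1) * k / 2 ≤ gridCell k x + 1 := by
  obtain ⟨hx₁, hx₂⟩ := abs_le.mp hx
  have hk0 : (0 : ℝ) < k := by exact_mod_cast hk
  have hs0 : 0 ≤ (x + 1) * k / 2 := by nlinarith
  have hsk : (x + 1) * k / 2 ≤ k := by nlinarith
  unfold gridCell
  rcases le_total ⌊(x + 1) * k / 2⌋₊ (k - 1) with h | h
  · rw [min_eq_left h]
    exact ⟨Nat.floor_le hs0, (Nat.lt_floor_add_one _).le⟩
  · rw [min_eq_right h]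
    refine ⟨(Nat.cast_le.mpr h).trans (Nat.floor_le hs0), ?_⟩
    rw [Nat.cast_sub hk, Nat.cast_one]
    linarith

theorem abs_sub_le_of_gridCell_eq {k : ℕ} (hk : 1 ≤ k) {x y : ℝ} (hx : |x| ≤ 1) (hy : |y| ≤ 1)
    (h : gridCell k x = gridCell k y) : |x - y| ≤ 2 / k := by
  have hk0 : (0 : ℝ) < k := by exact_mod_cast hk
  obtain ⟨hx₁, hx₂⟩ := gridCell_le_and_le_add_one hk hx
  obtain ⟨hy₁, hy₂⟩ := gridCell_le_and_le_add_one hk hy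
  rw [h] at hx₁ hx₂
  rw [abs_sub_le_iff, le_div_iff₀ hk0, le_div_iff₀ hk0]
  constructor <;> linarith

theorem sq_norm_sub_le_of_gridCell_eq {k : ℕ} (hk : 1 ≤ k) {z w : ℂ} (hz : z ∈ Qsq) (hw : w ∈ Qsq)
    (hre : gridCell k z.re = gridCell k w.re) (him : gridCell k z.im = gridCell k w.im) :
    ‖z - w‖ ^ 2 ≤ 8 / k ^ 2 := by
  have sq_le (a b : ℝ) (h : |a - b| ≤ 2 / k) : (a - b) ^ 2 ≤ 4 / k ^ 2 := by
    calc (a - b) ^ 2 = |a - b| ^ 2 := (sq_abs _).symm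
      _ ≤ (2 / k) ^ 2 := pow_le_pow_left₀ (abs_nonneg _) h 2
      _ = 4 / k ^ 2 := by ring
  have hre' := sq_le _ _ (abs_sub_le_of_gridCell_eq hk hz.1 hw.1 hre)
  have him' := sq_le _ _ (abs_sub_le_of_gridCell_eq hk hz.2 hw.2 him)
  rw [Complex.sq_norm, Complex.normSq_apply, Complex.sub_re, Complex.sub_im, ← sq, ← sq]
  linarith [show (8 : ℝ) / k ^ 2 = 4 / k ^ 2 + 4 / k ^ 2 by ring]

theorem exists_ne_sq_norm_sub_le_of_sq_lt_card {ι : Type*} [Fintype ι] {k : ℕ} (hk : 1 ≤ k)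
    (hcard : k ^ 2 < Fintype.card ι) {d : ι → ℂ} (hd : ∀ i, d i ∈ Qsq) :
    ∃ i j, i ≠ j ∧ ‖d i - d j‖ ^ 2 ≤ 8 / k ^ 2 := by
  obtain ⟨i, -, j, -, hij, hcell⟩ := Finset.exists_ne_map_eq_of_card_lt_of_maps_to
    (s := Finset.univ) (t := Finset.range k ×ˢ Finset.range k)
    (f := fun i => (gridCell k (d i).re, gridCell k (d i).im))
    (by simpa [sq] using hcard) (fun i _ => by simp [gridCell_lt hk])
  obtain ⟨hre, him⟩ := Prod.ext_iff.mp hcell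
  exact ⟨i, j, hij, sq_norm_sub_le_of_gridCell_eq hk (hd i) (hd j) hre him⟩

theorem exists_sq_lt_le_four_mul_sq {m : ℕ} (hm : 2 ≤ m) :
    ∃ k, 1 ≤ k ∧ k ^ 2 < m ∧ m ≤ 4 * k ^ 2 := by
  refine ⟨Nat.sqrt (m - 1), Nat.le_sqrt.mpr (by omega), ?_, ?_⟩
  · have := Nat.sqrt_le (m - 1)
    rw [sq]; omega
  · have h1 : m - 1 < (Nat.sqrt (m - 1) + 1) * (Nat.sqrt (m - 1) + 1) := Nat.lt_succ_sqrt _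
    have h2 : 1 ≤ Nat.sqrt (m - 1) := Nat.le_sqrt.mpr (by omega)
    have h3 : m ≤ (Nat.sqrt (m - 1) + 1) * (Nat.sqrt (m - 1) + 1) := by omega
    nlinarith

theorem exists_ne_sq_norm_sub_le_of_mem_Qsq {ι : Type*} [Fintype ι] (hcard : 2 ≤ Fintype.card ι)
    {d : ι → ℂ} (hd : ∀ i, d i ∈ Qsq) :
    ∃ i j, i ≠ j ∧ ‖d i - d j‖ ^ 2 ≤ 32 / Fintype.card ι := by
  obtain ⟨k, hk, hlt, hle⟩ := exists_sq_lt_le_four_mul_sq hcard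
  obtain ⟨i, j, hij, hclose⟩ := exists_ne_sq_norm_sub_le_of_sq_lt_card hk hlt hd
  refine ⟨i, j, hij, hclose.trans ?_⟩
  have hk0 : (0 : ℝ) < k := by exact_mod_cast hk
  rw [div_le_div_iff₀ (by positivity) (by positivity)]
  have : (Fintype.card ι : ℝ) ≤ 4 * k ^ 2 := by exact_mod_cast hle
  linarith

/-- For any m×m diagonal B with entries in Q (m ≥ 2) there is an off-diagonal matrix
unit A (zero diagonal, norm one) such that any C with A = BC − CB has ‖C‖ ≥ √(m/32). -/
theorem stmt9 (m : ℕ) (hm : 2 ≤ m) (d : Fin m → ℂ) (hd : ∀ i, d i ∈ Qsq) :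
    ∃ A : Matrix (Fin m) (Fin m) ℂ,
      (∀ i, A i i = 0) ∧ opNorm A = 1 ∧
      (∃ i j : Fin m, i ≠ j ∧ A = Matrix.single i j 1) ∧
      ∀ C : Matrix (Fin m) (Fin m) ℂ,
        A = Matrix.diagonal d * C - C * Matrix.diagonal d →
        Real.sqrt (m / 32) ≤ opNorm C := by
  obtain ⟨i, j, hij, hclose⟩ :=
    exists_ne_sq_norm_sub_le_of_mem_Qsq (by simpa using hm) hd
  rw [Fintype.card_fin] at hclose
  refine ⟨Matrix.single i j 1, fun l => ?_, opNorm_single_one i j, ⟨i, j, hij, rfl⟩,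
    fun C hC => ?_⟩
  · exact Matrix.single_apply_of_ne _ _ _ _ _ fun h => hij (h.1.trans h.2.symm)
  have hentry : (d i - d j) * C i j = 1 := by
    have := congrFun (congrFun hC i) j
    rw [Matrix.single_apply_same, diagonal_mul_sub_mul_diagonal_apply] at this
    linear_combination -this
  have hnorm : ‖d i - d j‖ ^ 2 * ‖C i j‖ ^ 2 = 1 := by
    rw [← mul_pow, ← norm_mul, hentry, norm_one, one_pow]
  rw [le_div_iff₀ (by exact_mod_cast (by omega : 0 < m))] at hclose
  calc √(m / 32) ≤ ‖C i j‖ := by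
        rw [Real.sqrt_le_left (norm_nonneg _)]
        nlinarith [mul_le_mul_of_nonneg_right hclose (sq_nonneg ‖C i j‖)]
    _ ≤ opNorm C := norm_apply_le_opNorm C i j
end
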